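/- arXiv:math/0010177 — 4 statements merged into one kernel-verified Lean document; each statement's English description precedes it below -/
import Mathlib

section
/- For the three-web on the domain {(x¹,x²,y¹,y²) ∈ ℝ⁴ : x¹y² ≠ 1 and x¹y² ≠ −1} given by f¹ = x¹ + y¹ + (1/2)(x¹)²y², f² = x² + y² − (1/2)x¹(y²)², with Δ := 1 + x¹y², the isoclinicity invariants are p = −(Δ² − 2Δ + 2)/(2Δ³(2−Δ)²) and q = (Δ² − 2Δ + 2)/(2Δ²(2−Δ)³); since Δ² − 2Δ + 2 = 1 + (x¹y²)² > 0, at every point of the domain p ≠ 0, q ≠ 0 and p ≠ q, so this web is nonisoclinic and satisfies the necessary conditions for extendability to a nonisoclinic 4-web W(4,2,2). -/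
noncomputable section

open Matrix

/-- Partial derivative of `g` with respect to the `j`-th coordinate at the point `x`. -/
def pd (j : Fin 2) (g : (Fin 2 → ℝ) → ℝ) (x : Fin 2 → ℝ) : ℝ :=
  deriv (fun t => g (Function.update x j t)) (x j)

variable (f : Fin 2 → (Fin 2 → ℝ) → (Fin 2 → ℝ) → ℝ)

/-- Jacobian matrix `f̄ = (∂fⁱ/∂xʲ)` with respect to the first group of variables. -/
def fbar (x y : Fin 2 → ℝ) : Matrix (Fin 2) (Fin 2) ℝ :=
  Matrix.of fun i j => pd j (fun x' => f i x' y) x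

/-- Jacobian matrix `f̃ = (∂fⁱ/∂yʲ)` with respect to the second group of variables. -/
def ftil (x y : Fin 2 → ℝ) : Matrix (Fin 2) (Fin 2) ℝ :=
  Matrix.of fun i j => pd j (fun y' => f i x y') y

/-- Mixed second partial derivative `∂²fⁱ/∂xˡ∂yᵐ`. -/
def d2 (i l m : Fin 2) (x y : Fin 2 → ℝ) : ℝ :=
  pd m (fun y' => pd l (fun x' => f i x' y') x) y

/-- Connection coefficients
`Γⁱⱼₖ = −∑_{l,m} (∂²fⁱ/∂xˡ∂yᵐ) ḡˡⱼ g̃ᵐₖ`, where `ḡ = f̄⁻¹`, `g̃ = f̃⁻¹`. -/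
def Gam (i j k : Fin 2) (x y : Fin 2 → ℝ) : ℝ :=
  - ∑ l : Fin 2, ∑ m : Fin 2,
      d2 f i l m x y * (fbar f x y)⁻¹ l j * (ftil f x y)⁻¹ m k

/-- Torsion covector `aⱼ = ∑ₖ (Γᵏⱼₖ − Γᵏₖⱼ)`. -/
def aCov (j : Fin 2) (x y : Fin 2 → ℝ) : ℝ :=
  ∑ k : Fin 2, (Gam f k j k x y - Gam f k k j x y)

/-- Covariant derivative `p_{ik} = ∑ₘ (∂aᵢ/∂xᵐ) ḡᵐₖ − ∑ⱼ aⱼ Γʲₖᵢ`. -/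
def pCov (i k : Fin 2) (x y : Fin 2 → ℝ) : ℝ :=
  (∑ m : Fin 2, pd m (fun x' => aCov f i x' y) x * (fbar f x y)⁻¹ m k)
    - ∑ j : Fin 2, aCov f j x y * Gam f j k i x y

/-- Covariant derivative `q_{ik} = ∑ₘ (∂aᵢ/∂yᵐ) g̃ᵐₖ − ∑ⱼ aⱼ Γʲᵢₖ`. -/
def qCov (i k : Fin 2) (x y : Fin 2 → ℝ) : ℝ :=
  (∑ m : Fin 2, pd m (fun y' => aCov f i x y') y * (ftil f x y)⁻¹ m k)
    - ∑ j : Fin 2, aCov f j x y * Gam f j i k x y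

/-- Isoclinicity invariant `p = (p₁₂ − p₂₁)/2`. -/
def pIso (x y : Fin 2 → ℝ) : ℝ := (pCov f 0 1 x y - pCov f 1 0 x y) / 2

/-- Isoclinicity invariant `q = (q₁₂ − q₂₁)/2`. -/
def qIso (x y : Fin 2 → ℝ) : ℝ := (qCov f 0 1 x y - qCov f 1 0 x y) / 2


/-- The web `f¹ = x¹ + y¹ + (1/2)(x¹)²y²`, `f² = x² + y² − (1/2)x¹(y²)²`.
(Indices: `x 0 ↦ x¹`, `x 1 ↦ x²`, `y 0 ↦ y¹`, `y 1 ↦ y²`.) -/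
noncomputable def webA : Fin 2 → (Fin 2 → ℝ) → (Fin 2 → ℝ) → ℝ :=
  ![fun x y => x 0 + y 0 + (1/2) * (x 0)^2 * y 1,
    fun x y => x 1 + y 1 - (1/2) * x 0 * (y 1)^2]

/-!
With `Δ = 1 + x¹y²` the Jacobians are triangular, `f̄ = [[Δ, 0], [-(y²)²/2, 1]]` and
`f̃ = [[1, (x¹)²/2], [0, 2 - Δ]]`, and the only nonzero mixed derivatives are
`∂²f¹/∂x¹∂y² = x¹` and `∂²f²/∂x¹∂y² = -y²`. So `Γ` is supported on `Γⁱ₁₂`, the torsion covector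
is `a = (y², x¹)/(Δ(2 - Δ))`, the products `aⱼΓʲ₁₂` cancel, and `p`, `q` come from `∂a₂/∂x¹` and
`∂a₁/∂y²` alone. The common numerator `Δ² - 2Δ + 2 = (Δ - 1)² + 1` never vanishes, and `p = q`
would force `-(2 - Δ) = Δ`.
-/

/-- This holds also for singular `A`, where both sides are `0`; that is why `Gam_webA` and
`aCov_webA` need no hypotheses. -/
theorem Matrix.inv_fin_two_eq_inv_det_smul {K : Type*} [Field K] (A : Matrix (Fin 2) (Fin 2) K) :
    A⁻¹ = (A 0 0 * A 1 1 - A 0 1 * A 1 0)⁻¹ • !![A 1 1, -A 0 1; -A 1 0, A 0 0] := by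
  rw [Matrix.inv_def, Ring.inverse_eq_inv, Matrix.det_fin_two, Matrix.adjugate_fin_two]

theorem fbar_webA (x y : Fin 2 → ℝ) :
    fbar webA x y = !![1 + x 0 * y 1, 0; -(y 1 ^ 2 / 2), 1] := by
  ext i j
  fin_cases i <;> fin_cases j <;>
    simp (disch := fun_prop) [fbar, pd, webA, Function.update_apply, -mul_eq_mul_right_iff] <;>
    ring

theorem ftil_webA (x y : Fin 2 → ℝ) :
    ftil webA x y = !![1, x 0 ^ 2 / 2; 0, 1 - x 0 * y 1] := by
  ext i j
  fin_cases i <;> fin_cases j <;>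
    simp (disch := fun_prop) [ftil, pd, webA, Function.update_apply, -mul_eq_mul_left_iff] <;>
    ring

theorem d2_webA (i l m : Fin 2) (x y : Fin 2 → ℝ) :
    d2 webA i l m x y = ![x 0, -y 1] i * ![1, 0] l * ![0, 1] m := by
  change pd m (fun y' => fbar webA x y' i l) y = _
  simp_rw [fbar_webA]
  fin_cases i <;> fin_cases l <;> fin_cases m <;>
    simp (disch := fun_prop) [pd, Function.update_apply]
  ring

theorem Gam_webA (i j k : Fin 2) (x y : Fin 2 → ℝ) :
    Gam webA i j k x y
      = ![-x 0, y 1] i * ![1, 0] j * ![0, 1] k * (1 + x 0 * y 1)⁻¹ * (1 - x 0 * y 1)⁻¹ := by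
  simp only [Gam, d2_webA, Matrix.inv_fin_two_eq_inv_det_smul, fbar_webA, ftil_webA,
    Fin.sum_univ_two]
  fin_cases i <;> fin_cases j <;> fin_cases k <;> simp

theorem aCov_webA (j : Fin 2) (x y : Fin 2 → ℝ) :
    aCov webA j x y = ![y 1, x 0] j * (1 + x 0 * y 1)⁻¹ * (1 - x 0 * y 1)⁻¹ := by
  simp only [aCov, Gam_webA, Fin.sum_univ_two]
  fin_cases j <;> simp

theorem pCov_webA_zero_one (x y : Fin 2 → ℝ) : pCov webA 0 1 x y = 0 := by
  simp_rw [pCov, aCov_webA, Gam_webA, Matrix.inv_fin_two_eq_inv_det_smul, fbar_webA]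
  simp [Fin.sum_univ_two, pd, Function.update_apply]

theorem pCov_webA_one_zero (x y : Fin 2 → ℝ) (hA : 1 + x 0 * y 1 ≠ 0) (hB : 1 - x 0 * y 1 ≠ 0) :
    pCov webA 1 0 x y
      = (1 + (x 0 * y 1) ^ 2) / ((1 + x 0 * y 1) ^ 3 * (1 - x 0 * y 1) ^ 2) := by
  simp_rw [pCov, aCov_webA, Gam_webA, Matrix.inv_fin_two_eq_inv_det_smul, fbar_webA]
  simp (disch := first | fun_prop | assumption) [Fin.sum_univ_two, pd, Function.update_apply]
  field_simp
  ring

theorem qCov_webA_one_zero (x y : Fin 2 → ℝ) : qCov webA 1 0 x y = 0 := by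
  simp_rw [qCov, aCov_webA, Gam_webA, Matrix.inv_fin_two_eq_inv_det_smul, ftil_webA]
  simp [Fin.sum_univ_two, pd, Function.update_apply]

theorem qCov_webA_zero_one (x y : Fin 2 → ℝ) (hA : 1 + x 0 * y 1 ≠ 0) (hB : 1 - x 0 * y 1 ≠ 0) :
    qCov webA 0 1 x y
      = (1 + (x 0 * y 1) ^ 2) / ((1 + x 0 * y 1) ^ 2 * (1 - x 0 * y 1) ^ 3) := by
  simp_rw [qCov, aCov_webA, Gam_webA, Matrix.inv_fin_two_eq_inv_det_smul, ftil_webA]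
  simp (disch := first | fun_prop | assumption) [Fin.sum_univ_two, pd, Function.update_apply]
  field_simp
  ring

theorem isoclinicity_formulas_ne {Δ : ℝ} (hΔ0 : Δ ≠ 0) (hΔ2 : 2 - Δ ≠ 0) :
    -((Δ^2 - 2*Δ + 2) / (2 * Δ^3 * (2 - Δ)^2)) ≠ 0 ∧
    (Δ^2 - 2*Δ + 2) / (2 * Δ^2 * (2 - Δ)^3) ≠ 0 ∧
    -((Δ^2 - 2*Δ + 2) / (2 * Δ^3 * (2 - Δ)^2)) ≠ (Δ^2 - 2*Δ + 2) / (2 * Δ^2 * (2 - Δ)^3) := by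
  have hN : Δ^2 - 2*Δ + 2 ≠ 0 := by nlinarith [sq_nonneg (Δ - 1)]
  refine ⟨by simp [*], by simp [*], fun h => ?_⟩
  have hdiff : -((Δ^2 - 2*Δ + 2) / (2 * Δ^3 * (2 - Δ)^2))
      - (Δ^2 - 2*Δ + 2) / (2 * Δ^2 * (2 - Δ)^3) = -((Δ^2 - 2*Δ + 2) / (Δ^3 * (2 - Δ)^3)) := by
    field_simp
    ring
  rw [h, sub_self] at hdiff
  simp [*] at hdiff

/-- For the web `webA` on the domain `x¹y² ≠ ±1`, with `Δ = 1 + x¹y²`, the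
isoclinicity invariants are `p = −(Δ²−2Δ+2)/(2Δ³(2−Δ)²)` and
`q = (Δ²−2Δ+2)/(2Δ²(2−Δ)³)`, and at every point `p ≠ 0`, `q ≠ 0`, `p ≠ q`:
the web is nonisoclinic and satisfies the necessary conditions for
extendability to a nonisoclinic 4-web `W(4,2,2)`. -/
theorem webA_isoclinicity_invariants (x y : Fin 2 → ℝ)
    (h1 : x 0 * y 1 ≠ 1) (h2 : x 0 * y 1 ≠ -1)
    (Δ : ℝ) (hΔ : Δ = 1 + x 0 * y 1) :
    pIso webA x y = -((Δ^2 - 2*Δ + 2) / (2 * Δ^3 * (2 - Δ)^2)) ∧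
    qIso webA x y = (Δ^2 - 2*Δ + 2) / (2 * Δ^2 * (2 - Δ)^3) ∧
    pIso webA x y ≠ 0 ∧ qIso webA x y ≠ 0 ∧ pIso webA x y ≠ qIso webA x y := by
  have hA : 1 + x 0 * y 1 ≠ 0 := fun h => h2 (by linarith)
  have hB : 1 - x 0 * y 1 ≠ 0 := fun h => h1 (by linarith)
  have hΔ0 : Δ ≠ 0 := hΔ ▸ hA
  have hΔ2 : 2 - Δ ≠ 0 := fun h => h1 (by linarith)
  have hp : pIso webA x y = -((Δ^2 - 2*Δ + 2) / (2 * Δ^3 * (2 - Δ)^2)) := by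
    rw [pIso, pCov_webA_zero_one, pCov_webA_one_zero x y hA hB]
    subst hΔ
    field_simp
    ring
  have hq : qIso webA x y = (Δ^2 - 2*Δ + 2) / (2 * Δ^2 * (2 - Δ)^3) := by
    rw [qIso, qCov_webA_one_zero, qCov_webA_zero_one x y hA hB]
    subst hΔ
    field_simp
    ring
  rw [hp, hq]
  exact ⟨rfl, rfl, isoclinicity_formulas_ne hΔ0 hΔ2⟩

end
end

section
/- For the three-web on the domain {(x¹,x²,y¹,y²) ∈ ℝ⁴ : x¹ ≠ 0, x² ≠ 0, y¹ ≠ 0} given by f¹ = x² e^{x¹y¹}, f² = x² + y², the torsion covector satisfies a₁ = 0 and a₂ = 1/(x¹x²y¹), and the isoclinicity invariants satisfy p = q = e^{−x¹y¹}/(2(x¹x²y¹)²) ≠ 0 at every point of the domain; hence this web is nonisoclinic but, since p = q, it cannot be extended to a nonisoclinic web W(4,2,2) (class G₃). -/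
noncomputable section

open Matrix

variable (f : Fin 2 → (Fin 2 → ℝ) → (Fin 2 → ℝ) → ℝ)

/-- The web `f¹ = x² e^{x¹y¹}`, `f² = x² + y²`.
(Indices: `x 0 ↦ x¹`, `x 1 ↦ x²`, `y 0 ↦ y¹`, `y 1 ↦ y²`.) -/
noncomputable def webB : Fin 2 → (Fin 2 → ℝ) → (Fin 2 → ℝ) → ℝ :=
  ![fun x y => x 1 * Real.exp (x 0 * y 0),
    fun x y => x 1 + y 1]

/-! For any `W(3,2,2)` in dimension two the torsion terms `∑ⱼ aⱼ Γʲ` drop out of `p` and `q`,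
which become the curls of the torsion covector in the frames `ḡ` and `g̃`. For `webB` the
second function `x² + y²` has vanishing mixed derivatives, so `Γ²` vanishes and `a₁ = 0`; then
`a₂` is the only surviving torsion coefficient, `1/(x¹x²y¹)`, and `p`, `q` are its
`x¹`- and `y¹`-derivatives divided by the nonzero entries `x²y¹e^{x¹y¹}` and `x¹x²e^{x¹y¹}`
of the Jacobians. These derivatives are `−x²y¹/(x¹x²y¹)²` and `−x¹x²/(x¹x²y¹)²`, whence
`p = q`. -/

section Partial

theorem pd_zero_eq_deriv (g : (Fin 2 → ℝ) → ℝ) (x : Fin 2 → ℝ) :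
    pd 0 g x = deriv (fun t => g ![t, x 1]) (x 0) := by
  have hupd : ∀ t, Function.update x 0 t = ![t, x 1] := fun t => by
    ext i; fin_cases i <;> simp
  simp only [pd, hupd]

theorem pd_one_eq_deriv (g : (Fin 2 → ℝ) → ℝ) (x : Fin 2 → ℝ) :
    pd 1 g x = deriv (fun t => g ![x 0, t]) (x 1) := by
  have hupd : ∀ t, Function.update x 1 t = ![x 0, t] := fun t => by
    ext i; fin_cases i <;> simp
  simp only [pd, hupd]

@[simp]
theorem pd_const (j : Fin 2) (c : ℝ) (x : Fin 2 → ℝ) : pd j (fun _ => c) x = 0 := by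
  simp [pd]

end Partial

section TwoWeb

variable (x y : Fin 2 → ℝ)

theorem d2_eq_pd_fbar (i l m : Fin 2) : d2 f i l m x y = pd m (fun y' => fbar f x y' i l) y :=
  rfl

theorem Gam_eq_zero_of_d2_eq_zero {i : Fin 2} (h : ∀ l m, d2 f i l m x y = 0) (j k : Fin 2) :
    Gam f i j k x y = 0 := by
  simp [Gam, h]

theorem aCov_zero : aCov f 0 x y = Gam f 1 0 1 x y - Gam f 1 1 0 x y := by
  simp [aCov, Fin.sum_univ_two]

theorem aCov_one : aCov f 1 x y = Gam f 0 1 0 x y - Gam f 0 0 1 x y := by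
  simp [aCov, Fin.sum_univ_two]

-- `∑ⱼ aⱼ (Γʲ₁₀ − Γʲ₀₁) = 0`, because `a₀ = Γ¹₀₁ − Γ¹₁₀` and `a₁ = Γ⁰₁₀ − Γ⁰₀₁`.
theorem pIso_eq_curl : pIso f x y =
    ((∑ m, pd m (fun x' => aCov f 0 x' y) x * (fbar f x y)⁻¹ m 1)
      - ∑ m, pd m (fun x' => aCov f 1 x' y) x * (fbar f x y)⁻¹ m 0) / 2 := by
  simp only [pIso, pCov, Fin.sum_univ_two]
  rw [aCov_zero f x y, aCov_one f x y]
  ring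

theorem qIso_eq_curl : qIso f x y =
    ((∑ m, pd m (fun y' => aCov f 0 x y') y * (ftil f x y)⁻¹ m 1)
      - ∑ m, pd m (fun y' => aCov f 1 x y') y * (ftil f x y)⁻¹ m 0) / 2 := by
  simp only [qIso, qCov, Fin.sum_univ_two]
  rw [aCov_zero f x y, aCov_one f x y]
  ring

end TwoWeb

section WebB

variable (x y : Fin 2 → ℝ)

theorem webB_fbar : fbar webB x y =
    !![x 1 * y 0 * Real.exp (x 0 * y 0), Real.exp (x 0 * y 0); 0, 1] := by
  have h00 : HasDerivAt (fun t => x 1 * Real.exp (t * y 0))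
      (x 1 * (Real.exp (x 0 * y 0) * (1 * y 0))) (x 0) :=
    (((hasDerivAt_id _).mul_const _).exp).const_mul _
  have h01 : HasDerivAt (fun t => t * Real.exp (x 0 * y 0)) (1 * Real.exp (x 0 * y 0)) (x 1) :=
    (hasDerivAt_id _).mul_const _
  ext i j
  fin_cases i <;> fin_cases j <;>
    simp [fbar, webB, pd_zero_eq_deriv, pd_one_eq_deriv, h00.deriv, h01.deriv]
  ring

theorem webB_ftil : ftil webB x y = !![x 0 * x 1 * Real.exp (x 0 * y 0), 0; 0, 1] := by
  have h00 : HasDerivAt (fun t => x 1 * Real.exp (x 0 * t))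
      (x 1 * (Real.exp (x 0 * y 0) * (x 0 * 1))) (y 0) :=
    (((hasDerivAt_id _).const_mul _).exp).const_mul _
  ext i j
  fin_cases i <;> fin_cases j <;>
    simp [ftil, webB, pd_zero_eq_deriv, pd_one_eq_deriv, h00.deriv]
  ring

theorem webB_fbar_inv : (fbar webB x y)⁻¹ = (x 1 * y 0 * Real.exp (x 0 * y 0))⁻¹ •
    !![1, -Real.exp (x 0 * y 0); 0, x 1 * y 0 * Real.exp (x 0 * y 0)] := by
  simp [webB_fbar, inv_def, det_fin_two_of, adjugate_fin_two_of, Ring.inverse_eq_inv']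

theorem webB_ftil_inv : (ftil webB x y)⁻¹ = (x 0 * x 1 * Real.exp (x 0 * y 0))⁻¹ •
    !![1, 0; 0, x 0 * x 1 * Real.exp (x 0 * y 0)] := by
  simp [webB_ftil, inv_def, det_fin_two_of, adjugate_fin_two_of, Ring.inverse_eq_inv']

theorem webB_d2_zero_zero_zero :
    d2 webB 0 0 0 x y = x 1 * (1 + x 0 * y 0) * Real.exp (x 0 * y 0) := by
  have h : HasDerivAt (fun t => x 1 * t * Real.exp (x 0 * t))
      (x 1 * 1 * Real.exp (x 0 * y 0) + x 1 * y 0 * (Real.exp (x 0 * y 0) * (x 0 * 1))) (y 0) :=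
    ((hasDerivAt_id _).const_mul _).mul (((hasDerivAt_id _).const_mul _).exp)
  simp only [d2_eq_pd_fbar, webB_fbar, of_apply, cons_val', cons_val_zero, cons_val_fin_one,
    pd_zero_eq_deriv, h.deriv]
  ring

theorem webB_d2_zero_one_zero : d2 webB 0 1 0 x y = x 0 * Real.exp (x 0 * y 0) := by
  have h : HasDerivAt (fun t => Real.exp (x 0 * t)) (Real.exp (x 0 * y 0) * (x 0 * 1)) (y 0) :=
    ((hasDerivAt_id _).const_mul _).exp
  simp only [d2_eq_pd_fbar, webB_fbar, of_apply, cons_val', cons_val_zero, cons_val_one,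
    cons_val_fin_one, pd_zero_eq_deriv, h.deriv]
  ring

theorem webB_d2_zero_any_one (l : Fin 2) : d2 webB 0 l 1 x y = 0 := by
  fin_cases l <;> simp [d2_eq_pd_fbar, webB_fbar, pd_one_eq_deriv]

theorem webB_d2_one (l m : Fin 2) : d2 webB 1 l m x y = 0 := by
  fin_cases l <;> simp [d2_eq_pd_fbar, webB_fbar]

theorem webB_aCov_zero : aCov webB 0 x y = 0 := by
  simp [aCov_zero, Gam_eq_zero_of_d2_eq_zero _ _ _ (webB_d2_one x y)]

-- Both sides are junk `0` when `x¹x²y¹ = 0`; holding everywhere, the identity can be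
-- differentiated along coordinate lines.
theorem webB_aCov_one : aCov webB 1 x y = (x 0 * x 1 * y 0)⁻¹ := by
  simp only [aCov_one, Gam, Fin.sum_univ_two, webB_d2_zero_zero_zero, webB_d2_zero_one_zero,
    webB_d2_zero_any_one, webB_fbar_inv, webB_ftil_inv, Matrix.smul_apply, smul_eq_mul, of_apply,
    cons_val', cons_val_zero, cons_val_one, empty_val', cons_val_fin_one]
  rcases eq_or_ne (x 0) 0 with h | h
  · simp [h]
  rcases eq_or_ne (x 1) 0 with h' | h'
  · simp [h']
  rcases eq_or_ne (y 0) 0 with h'' | h''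
  · simp [h'']
  field_simp
  ring

theorem webB_pd_aCov_one_x (hne : x 0 * x 1 * y 0 ≠ 0) :
    pd 0 (fun x' => aCov webB 1 x' y) x = -(x 1 * y 0) / (x 0 * x 1 * y 0) ^ 2 := by
  have h : HasDerivAt (fun t => (t * x 1 * y 0)⁻¹)
      (-(1 * x 1 * y 0) / (x 0 * x 1 * y 0) ^ 2) (x 0) :=
    (((hasDerivAt_id _).mul_const _).mul_const _).inv hne
  simpa [webB_aCov_one, pd_zero_eq_deriv] using h.deriv

theorem webB_pd_aCov_one_y (hne : x 0 * x 1 * y 0 ≠ 0) :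
    pd 0 (fun y' => aCov webB 1 x y') y = -(x 0 * x 1) / (x 0 * x 1 * y 0) ^ 2 := by
  have h : HasDerivAt (fun t => (x 0 * x 1 * t)⁻¹)
      (-(x 0 * x 1 * 1) / (x 0 * x 1 * y 0) ^ 2) (y 0) :=
    ((hasDerivAt_id _).const_mul _).inv hne
  simpa [webB_aCov_one, pd_zero_eq_deriv] using h.deriv

theorem webB_pIso (hne : x 0 * x 1 * y 0 ≠ 0) :
    pIso webB x y = Real.exp (-(x 0 * y 0)) / (2 * (x 0 * x 1 * y 0) ^ 2) := by
  simp only [pIso_eq_curl, webB_aCov_zero, pd_const, zero_mul, Fin.sum_univ_two,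
    webB_pd_aCov_one_x x y hne, webB_fbar_inv, Matrix.smul_apply, smul_eq_mul, of_apply, cons_val',
    cons_val_zero, cons_val_one, cons_val_fin_one, Real.exp_neg]
  field_simp
  ring

theorem webB_qIso (hne : x 0 * x 1 * y 0 ≠ 0) :
    qIso webB x y = Real.exp (-(x 0 * y 0)) / (2 * (x 0 * x 1 * y 0) ^ 2) := by
  simp only [qIso_eq_curl, webB_aCov_zero, pd_const, zero_mul, Fin.sum_univ_two,
    webB_pd_aCov_one_y x y hne, webB_ftil_inv, Matrix.smul_apply, smul_eq_mul, of_apply, cons_val',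
    cons_val_zero, cons_val_one, cons_val_fin_one, Real.exp_neg]
  field_simp
  ring

end WebB

/-- For the web `webB` on the domain `x¹ ≠ 0, x² ≠ 0, y¹ ≠ 0`, the torsion
covector satisfies `a₁ = 0` and `a₂ = 1/(x¹x²y¹)`, and the isoclinicity
invariants satisfy `p = q = e^{−x¹y¹}/(2(x¹x²y¹)²) ≠ 0`; hence the web is
nonisoclinic but, since `p = q`, it cannot be extended to a nonisoclinic
web `W(4,2,2)` (class G₃). -/
theorem webB_torsion_and_invariants (x y : Fin 2 → ℝ)
    (h1 : x 0 ≠ 0) (h2 : x 1 ≠ 0) (h3 : y 0 ≠ 0) :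
    aCov webB 0 x y = 0 ∧
    aCov webB 1 x y = 1 / (x 0 * x 1 * y 0) ∧
    pIso webB x y = Real.exp (-(x 0 * y 0)) / (2 * (x 0 * x 1 * y 0)^2) ∧
    qIso webB x y = Real.exp (-(x 0 * y 0)) / (2 * (x 0 * x 1 * y 0)^2) ∧
    pIso webB x y ≠ 0 := by
  have hne : x 0 * x 1 * y 0 ≠ 0 := mul_ne_zero (mul_ne_zero h1 h2) h3
  refine ⟨webB_aCov_zero x y, by rw [webB_aCov_one, one_div], webB_pIso x y hne,
    webB_qIso x y hne, ?_⟩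
  rw [webB_pIso x y hne]
  positivity
end
end

section
/- Fix real constants c_{jk} (j,k ∈ {1,2}) and consider the polynomial three-web given by f¹ = x¹ + y¹, f² = x² + y² + ∑_{j,k} c_{jk} x^j y^k on the domain where Δ₁ := 1 + c₂₁y¹ + c₂₂y² ≠ 0 and Δ₂ := 1 + c₁₂x¹ + c₂₂x² ≠ 0. With α := c₁₁c₂₂ − c₁₂c₂₁ and β := α(x¹ − y¹) + c₁₂ − c₂₁, the isoclinicity invariants of this web satisfy p = q = c₂₂β/(2Δ₁²Δ₂²). Consequently every web of this family is nonisoclinic exactly where c₂₂β ≠ 0, and since p = q no web of this family can be extended to a nonisoclinic web W(4,2,2) (class G₃). -/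
/-! Both Jacobians of `webD c` are lower triangular with first row `(1, 0)`, and the only
nonzero mixed second derivatives are `∂²f²/∂xˡ∂yᵐ = c_{lm}`. Hence `Γ²ⱼₖ` is the only nonzero
connection component and the torsion covector is `a = (-β/(Δ₁Δ₂), 0)`, so every product
`aⱼΓʲ` vanishes. Since moreover `ḡ¹₂ = g̃¹₂ = 0`, the invariants reduce to
`p = (∂a₁/∂x²) ḡ²₂ / 2` and `q = (∂a₁/∂y²) g̃²₂ / 2`, and differentiating `1/Δ₂` in `x²`
(resp. `1/Δ₁` in `y²`) gives `c₂₂β/(2Δ₁²Δ₂²)` for both. -/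

noncomputable section

open Matrix

variable (f : Fin 2 → (Fin 2 → ℝ) → (Fin 2 → ℝ) → ℝ)

/-- The polynomial web `f¹ = x¹ + y¹`, `f² = x² + y² + ∑_{j,k} c_{jk} x^j y^k`
with fixed real constants `c_{jk}`.
(Indices: `x 0 ↦ x¹`, `x 1 ↦ x²`, `y 0 ↦ y¹`, `y 1 ↦ y²`; `c 0 0 ↦ c₁₁` etc.) -/
noncomputable def webD (c : Fin 2 → Fin 2 → ℝ) :
    Fin 2 → (Fin 2 → ℝ) → (Fin 2 → ℝ) → ℝ :=
  ![fun x y => x 0 + y 0,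
    fun x y => x 1 + y 1 + ∑ j : Fin 2, ∑ k : Fin 2, c j k * x j * y k]

/-- For `d = 0` both sides vanish, as Mathlib's inverse of a singular matrix is `0`. -/
lemma Matrix.inv_fin_two_of_one_zero {K : Type*} [Field K] (u d : K) :
    !![1, 0; u, d]⁻¹ = d⁻¹ • !![d, 0; -u, 1] := by
  simp [Matrix.inv_def, Matrix.adjugate_fin_two_of]

lemma deriv_const_div_affine {𝕜 : Type*} [NontriviallyNormedField 𝕜] (K a b t : 𝕜)
    (h : a + b * t ≠ 0) :
    deriv (fun s => K / (a + b * s)) t = -(K * b) / (a + b * t) ^ 2 := by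
  rw [deriv_const_div (d := fun s => a + b * s) K (by fun_prop) h]
  simp

section webD

variable (c : Fin 2 → Fin 2 → ℝ) (x y : Fin 2 → ℝ)

@[simp] lemma d2_webD_zero (l m : Fin 2) : d2 (webD c) 0 l m x y = 0 := by
  fin_cases l <;> fin_cases m <;>
    simp (disch := fun_prop) [d2, pd, webD, Function.update_apply]

@[simp] lemma d2_webD_one (l m : Fin 2) : d2 (webD c) 1 l m x y = c l m := by
  fin_cases l <;> fin_cases m <;>
    simp (disch := fun_prop) [d2, pd, webD, Fin.sum_univ_two, Function.update_apply]

lemma fbar_webD :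
    fbar (webD c) x y =
      !![1, 0; c 0 0 * y 0 + c 0 1 * y 1, 1 + c 1 0 * y 0 + c 1 1 * y 1] := by
  ext i j
  fin_cases i <;> fin_cases j <;>
    simp (disch := fun_prop) [fbar, pd, webD, Fin.sum_univ_two, Function.update_apply, add_assoc]

lemma ftil_webD :
    ftil (webD c) x y =
      !![1, 0; c 0 0 * x 0 + c 1 0 * x 1, 1 + c 0 1 * x 0 + c 1 1 * x 1] := by
  ext i j
  fin_cases i <;> fin_cases j <;>
    simp (disch := fun_prop) [ftil, pd, webD, Fin.sum_univ_two, Function.update_apply, add_assoc]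

@[simp] lemma Gam_webD_zero (j k : Fin 2) : Gam (webD c) 0 j k x y = 0 := by
  simp [Gam]

@[simp] lemma aCov_webD_one : aCov (webD c) 1 x y = 0 := by
  simp [aCov, Fin.sum_univ_two]

/-- This holds even where `Δ₁ = 0` or `Δ₂ = 0`: there the inverse Jacobian and the right-hand
side both degenerate to `0`. -/
lemma aCov_webD_zero :
    aCov (webD c) 0 x y =
      -((c 0 0 * c 1 1 - c 0 1 * c 1 0) * (x 0 - y 0) + c 0 1 - c 1 0) /
        (1 + c 1 0 * y 0 + c 1 1 * y 1) / (1 + c 0 1 * x 0 + c 1 1 * x 1) := by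
  simp only [aCov, Gam, fbar_webD, ftil_webD, Matrix.inv_fin_two_of_one_zero, Matrix.smul_apply,
    of_apply, cons_val', cons_val_zero, cons_val_one, cons_val_fin_one, smul_eq_mul,
    Fin.sum_univ_two, d2_webD_zero, d2_webD_one]
  ring

lemma pd_aCov_webD_zero_x (h2 : 1 + c 0 1 * x 0 + c 1 1 * x 1 ≠ 0) :
    pd 1 (fun x' => aCov (webD c) 0 x' y) x =
      c 1 1 * ((c 0 0 * c 1 1 - c 0 1 * c 1 0) * (x 0 - y 0) + c 0 1 - c 1 0) /
        (1 + c 1 0 * y 0 + c 1 1 * y 1) / (1 + c 0 1 * x 0 + c 1 1 * x 1) ^ 2 := by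
  simp only [pd, aCov_webD_zero, Function.update_self, Function.update_of_ne one_ne_zero.symm]
  rw [deriv_const_div_affine _ _ _ _ h2]
  ring

lemma pd_aCov_webD_zero_y (h1 : 1 + c 1 0 * y 0 + c 1 1 * y 1 ≠ 0) :
    pd 1 (fun y' => aCov (webD c) 0 x y') y =
      c 1 1 * ((c 0 0 * c 1 1 - c 0 1 * c 1 0) * (x 0 - y 0) + c 0 1 - c 1 0) /
        (1 + c 1 0 * y 0 + c 1 1 * y 1) ^ 2 / (1 + c 0 1 * x 0 + c 1 1 * x 1) := by
  simp only [pd, aCov_webD_zero, Function.update_self, Function.update_of_ne one_ne_zero.symm,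
    div_right_comm _ (1 + c 1 0 * y 0 + _)]
  rw [deriv_const_div_affine _ _ _ _ h1]
  ring

lemma pIso_webD (h2 : 1 + c 0 1 * x 0 + c 1 1 * x 1 ≠ 0) :
    pIso (webD c) x y =
      c 1 1 * ((c 0 0 * c 1 1 - c 0 1 * c 1 0) * (x 0 - y 0) + c 0 1 - c 1 0) /
        (2 * (1 + c 1 0 * y 0 + c 1 1 * y 1) ^ 2 * (1 + c 0 1 * x 0 + c 1 1 * x 1) ^ 2) := by
  simp only [pIso, pCov, Fin.sum_univ_two, pd_aCov_webD_zero_x c x y h2]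
  simp only [aCov_webD_one, pd, deriv_const', Gam_webD_zero, fbar_webD,
    Matrix.inv_fin_two_of_one_zero, Matrix.smul_apply, of_apply, cons_val', cons_val_zero,
    cons_val_one, cons_val_fin_one, smul_eq_mul, div_eq_mul_inv, mul_inv, ← inv_pow]
  ring

lemma qIso_webD (h1 : 1 + c 1 0 * y 0 + c 1 1 * y 1 ≠ 0) :
    qIso (webD c) x y =
      c 1 1 * ((c 0 0 * c 1 1 - c 0 1 * c 1 0) * (x 0 - y 0) + c 0 1 - c 1 0) /
        (2 * (1 + c 1 0 * y 0 + c 1 1 * y 1) ^ 2 * (1 + c 0 1 * x 0 + c 1 1 * x 1) ^ 2) := by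
  simp only [qIso, qCov, Fin.sum_univ_two, pd_aCov_webD_zero_y c x y h1]
  simp only [aCov_webD_one, pd, deriv_const', Gam_webD_zero, ftil_webD,
    Matrix.inv_fin_two_of_one_zero, Matrix.smul_apply, of_apply, cons_val', cons_val_zero,
    cons_val_one, cons_val_fin_one, smul_eq_mul, div_eq_mul_inv, mul_inv, ← inv_pow]
  ring

end webD

/-- For the polynomial web `webD c` on the domain
`Δ₁ = 1 + c₂₁y¹ + c₂₂y² ≠ 0`, `Δ₂ = 1 + c₁₂x¹ + c₂₂x² ≠ 0`, with
`α = c₁₁c₂₂ − c₁₂c₂₁` and `β = α(x¹ − y¹) + c₁₂ − c₂₁`, the isoclinicity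
invariants satisfy `p = q = c₂₂β/(2Δ₁²Δ₂²)`.  Consequently the web is
nonisoclinic exactly where `c₂₂β ≠ 0`, and since `p = q` no web of this family
can be extended to a nonisoclinic web `W(4,2,2)` (class G₃). -/
theorem webD_isoclinicity_invariants (c : Fin 2 → Fin 2 → ℝ) (x y : Fin 2 → ℝ)
    (Δ₁ Δ₂ α β : ℝ)
    (hΔ₁ : Δ₁ = 1 + c 1 0 * y 0 + c 1 1 * y 1)
    (hΔ₂ : Δ₂ = 1 + c 0 1 * x 0 + c 1 1 * x 1)
    (hα : α = c 0 0 * c 1 1 - c 0 1 * c 1 0)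
    (hβ : β = α * (x 0 - y 0) + c 0 1 - c 1 0)
    (h1 : Δ₁ ≠ 0) (h2 : Δ₂ ≠ 0) :
    pIso (webD c) x y = c 1 1 * β / (2 * Δ₁^2 * Δ₂^2) ∧
    qIso (webD c) x y = c 1 1 * β / (2 * Δ₁^2 * Δ₂^2) ∧
    ((pIso (webD c) x y)^2 + (qIso (webD c) x y)^2 > 0 ↔ c 1 1 * β ≠ 0) := by
  subst hΔ₁ hΔ₂ hα hβ
  have hp := pIso_webD c x y h2
  have hq := qIso_webD c x y h1
  refine ⟨hp, hq, ?_⟩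
  rw [hp, hq, ← two_mul, gt_iff_lt, mul_pos_iff_of_pos_left two_pos, sq_pos_iff]
  simp [h1, h2]

end
end

section
/- For the three-web on the domain {(x¹,x²,y¹,y²) ∈ ℝ⁴ : x¹y² ≠ −1} given by f¹ = x¹ + y¹ + (1/2)(x¹)²y², f² = x² + y² + (1/2)x¹(y²)², with Δ := 1 + x¹y², the covariant derivatives of the torsion covector satisfy p₁₂ = p₂₂ = q₁₁ = q₂₁ = 0, p₁₁ = 2(y²)²/Δ⁴, q₂₂ = −2(x¹)²/Δ⁴, p₂₁ = (1 − x¹y²)/Δ⁴, q₁₂ = −(1 − x¹y²)/Δ⁴ = −p₂₁, and consequently the isoclinicity invariants satisfy p = q = (x¹y² − 1)/(2Δ⁴) (so this web belongs to the classes E₁₁₁ and G₃). -/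
noncomputable section

open Matrix

variable (f : Fin 2 → (Fin 2 → ℝ) → (Fin 2 → ℝ) → ℝ)

/-- The web `f¹ = x¹ + y¹ + (1/2)(x¹)²y²`, `f² = x² + y² + (1/2)x¹(y²)²`.
(Indices: `x 0 ↦ x¹`, `x 1 ↦ x²`, `y 0 ↦ y¹`, `y 1 ↦ y²`.) -/
noncomputable def webF : Fin 2 → (Fin 2 → ℝ) → (Fin 2 → ℝ) → ℝ :=
  ![fun x y => x 0 + y 0 + (1/2) * (x 0)^2 * y 1,
    fun x y => x 1 + y 1 + (1/2) * x 0 * (y 1)^2]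

/-! The Jacobians of `webF` are triangular with diagonal entries `1` and `Δ = 1 + x¹y²`, and the
only nonzero mixed second derivatives are `∂²fⁱ/∂x¹∂y² = (x¹, y²)ⁱ`. Hence the only nonzero
connection coefficients are `Γⁱ₁₂ = -(x¹, y²)ⁱ/Δ²`, and the torsion covector is
`a = (-y², x¹)/Δ²`. Since `a` is orthogonal to `(x¹, y²)`, the `Γ`-terms of `p` and `q` cancel,
and since `a` depends on `x¹` and `y²` only, `p_{ik} = (∂aᵢ/∂x¹) ḡ¹ₖ` and `q_{ik} = (∂aᵢ/∂y²) g̃²ₖ`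
come down to derivatives of one-variable functions `(α + γt)/(1 + βt)²`. -/

open Filter Topology

theorem pd_congr_of_eventuallyEq {j : Fin 2} {g g' : (Fin 2 → ℝ) → ℝ} {x : Fin 2 → ℝ}
    (h : g =ᶠ[𝓝 x] g') : pd j g x = pd j g' x := by
  have hline : Tendsto (Function.update x j) (𝓝 (x j)) (𝓝 x) := by
    simpa using ((continuous_const (y := x)).update j continuous_id).tendsto (x j)
  exact (h.comp_tendsto hline).deriv_eq

theorem pd_comp_eval (j : Fin 2) (φ : ℝ → ℝ) (x : Fin 2 → ℝ) :
    pd j (φ ∘ Function.eval j) x = deriv φ (x j) := by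
  simp [pd]

theorem pd_comp_eval_of_ne {j k : Fin 2} (hjk : j ≠ k) (φ : ℝ → ℝ) (x : Fin 2 → ℝ) :
    pd j (φ ∘ Function.eval k) x = 0 := by
  simp [pd, Function.update_of_ne hjk.symm]

theorem deriv_div_one_add_mul_sq {a b c t : ℝ} (h : 1 + b * t ≠ 0) :
    deriv (fun s => (a + c * s) / (1 + b * s) ^ 2) t
      = (c * (1 + b * t) - 2 * b * (a + c * t)) / (1 + b * t) ^ 3 := by
  have hnum : HasDerivAt (fun s => a + c * s) c t := by
    simpa using ((hasDerivAt_id t).const_mul c).const_add a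
  have hden : HasDerivAt (fun s => (1 + b * s) ^ 2) (2 * (1 + b * t) * b) t :=
    ((((hasDerivAt_id t).const_mul b).const_add 1).pow 2).congr_deriv (by simp)
  rw [(hnum.fun_div hden (pow_ne_zero 2 h)).deriv]
  field_simp

theorem webF_fbar (x y : Fin 2 → ℝ) :
    fbar webF x y = !![1 + x 0 * y 1, 0; 1/2 * (y 1)^2, 1] := by
  ext i j
  fin_cases i <;> fin_cases j <;> simp [fbar, pd, webF, Function.update_apply]
  simp (disch := fun_prop) only [deriv_fun_add, deriv_fun_mul, deriv_fun_pow, deriv_id'', deriv_const']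
  ring

theorem webF_ftil (x y : Fin 2 → ℝ) :
    ftil webF x y = !![1, 1/2 * (x 0)^2; 0, 1 + x 0 * y 1] := by
  ext i j
  fin_cases i <;> fin_cases j <;> simp [ftil, pd, webF, Function.update_apply]
  simp (disch := fun_prop) only [deriv_fun_add, deriv_fun_mul, deriv_fun_pow, deriv_id'', deriv_const',
    deriv_const_add_id']
  ring

theorem webF_fbar_inv {x y : Fin 2 → ℝ} (hΔ : 1 + x 0 * y 1 ≠ 0) :
    (fbar webF x y)⁻¹ = !![(1 + x 0 * y 1)⁻¹, 0; -(1/2 * (y 1)^2) / (1 + x 0 * y 1), 1] := by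
  rw [webF_fbar]
  refine Matrix.inv_eq_right_inv ?_
  ext i j
  fin_cases i <;> fin_cases j <;> simp [Matrix.mul_apply, hΔ, div_eq_mul_inv]

theorem webF_ftil_inv {x y : Fin 2 → ℝ} (hΔ : 1 + x 0 * y 1 ≠ 0) :
    (ftil webF x y)⁻¹ = !![1, -(1/2 * (x 0)^2) / (1 + x 0 * y 1); 0, (1 + x 0 * y 1)⁻¹] := by
  rw [webF_ftil]
  refine Matrix.inv_eq_right_inv ?_
  ext i j
  fin_cases i <;> fin_cases j <;> simp [Matrix.mul_apply, hΔ, div_eq_mul_inv]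

theorem webF_d2 (i l m : Fin 2) (x y : Fin 2 → ℝ) :
    d2 webF i l m x y = if l = 0 ∧ m = 1 then ![x 0, y 1] i else 0 := by
  have h : ∀ y', pd l (fun x' => webF i x' y') x = fbar webF x y' i l := fun _ => rfl
  simp only [d2, h, webF_fbar]
  fin_cases i <;> fin_cases l <;> fin_cases m <;> simp [pd]

theorem webF_Gam {x y : Fin 2 → ℝ} (hΔ : 1 + x 0 * y 1 ≠ 0) (i j k : Fin 2) :
    Gam webF i j k x y = if j = 0 ∧ k = 1 then -![x 0, y 1] i / (1 + x 0 * y 1) ^ 2 else 0 := by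
  simp only [Gam, Fin.sum_univ_two, webF_d2, webF_fbar_inv hΔ, webF_ftil_inv hΔ]
  fin_cases i <;> fin_cases j <;> fin_cases k <;> simp <;> field_simp

theorem webF_aCov {x y : Fin 2 → ℝ} (hΔ : 1 + x 0 * y 1 ≠ 0) (i : Fin 2) :
    aCov webF i x y = ![-(y 1), x 0] i / (1 + x 0 * y 1) ^ 2 := by
  fin_cases i <;> simp [aCov, webF_Gam hΔ, neg_div]

theorem webF_sum_aCov_mul_Gam {x y : Fin 2 → ℝ} (hΔ : 1 + x 0 * y 1 ≠ 0) (k i : Fin 2) :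
    ∑ j, aCov webF j x y * Gam webF j k i x y = 0 := by
  simp only [Fin.sum_univ_two, webF_aCov hΔ, webF_Gam hΔ, Matrix.cons_val_zero, Matrix.cons_val_one]
  split_ifs <;> ring

theorem webF_aCov_eventuallyEq_x {x y : Fin 2 → ℝ} (hΔ : 1 + x 0 * y 1 ≠ 0) (i : Fin 2) :
    (fun x' => aCov webF i x' y) =ᶠ[𝓝 x]
      (fun t => (![-(y 1), 0] i + ![0, 1] i * t) / (1 + y 1 * t) ^ 2) ∘ Function.eval 0 := by
  have hnear : ∀ᶠ x' in 𝓝 x, 1 + x' 0 * y 1 ≠ 0 :=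
    (by fun_prop : Continuous fun x' : Fin 2 → ℝ => 1 + x' 0 * y 1).continuousAt.eventually_ne hΔ
  filter_upwards [hnear] with x' hx'
  rw [webF_aCov hx']
  fin_cases i <;> simp <;> ring

theorem webF_aCov_eventuallyEq_y {x y : Fin 2 → ℝ} (hΔ : 1 + x 0 * y 1 ≠ 0) (i : Fin 2) :
    (fun y' => aCov webF i x y') =ᶠ[𝓝 y]
      (fun t => (![0, x 0] i + ![-1, 0] i * t) / (1 + x 0 * t) ^ 2) ∘ Function.eval 1 := by
  have hnear : ∀ᶠ y' in 𝓝 y, 1 + x 0 * y' 1 ≠ 0 :=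
    (by fun_prop : Continuous fun y' : Fin 2 → ℝ => 1 + x 0 * y' 1).continuousAt.eventually_ne hΔ
  filter_upwards [hnear] with y' hy'
  rw [webF_aCov hy']
  fin_cases i <;> simp

theorem webF_pCov {x y : Fin 2 → ℝ} (hΔ : 1 + x 0 * y 1 ≠ 0) (i k : Fin 2) :
    pCov webF i k x y
      = if k = 0 then ![2 * y 1 ^ 2, 1 - x 0 * y 1] i / (1 + x 0 * y 1) ^ 4 else 0 := by
  have hΔ' : 1 + y 1 * x 0 ≠ 0 := by rwa [mul_comm]
  simp only [pCov, webF_sum_aCov_mul_Gam hΔ, sub_zero, Fin.sum_univ_two,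
    pd_congr_of_eventuallyEq (webF_aCov_eventuallyEq_x hΔ i), pd_comp_eval_of_ne one_ne_zero,
    pd_comp_eval, deriv_div_one_add_mul_sq hΔ', webF_fbar_inv hΔ]
  fin_cases i <;> fin_cases k <;> simp <;> field_simp
  ring

theorem webF_qCov {x y : Fin 2 → ℝ} (hΔ : 1 + x 0 * y 1 ≠ 0) (i k : Fin 2) :
    qCov webF i k x y
      = if k = 1 then ![x 0 * y 1 - 1, -(2 * x 0 ^ 2)] i / (1 + x 0 * y 1) ^ 4 else 0 := by
  simp only [qCov, webF_sum_aCov_mul_Gam hΔ, sub_zero, Fin.sum_univ_two,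
    pd_congr_of_eventuallyEq (webF_aCov_eventuallyEq_y hΔ i), pd_comp_eval_of_ne zero_ne_one,
    pd_comp_eval, deriv_div_one_add_mul_sq hΔ, webF_ftil_inv hΔ]
  fin_cases i <;> fin_cases k <;> simp <;> field_simp
  ring

/-- For the web `webF` on the domain `x¹y² ≠ −1`, with `Δ = 1 + x¹y²`, the
covariant derivatives of the torsion covector satisfy
`p₁₂ = p₂₂ = q₁₁ = q₂₁ = 0`, `p₁₁ = 2(y²)²/Δ⁴`, `q₂₂ = −2(x¹)²/Δ⁴`,
`p₂₁ = (1 − x¹y²)/Δ⁴`, `q₁₂ = −(1 − x¹y²)/Δ⁴ = −p₂₁`, and consequently the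
isoclinicity invariants satisfy `p = q = (x¹y² − 1)/(2Δ⁴)`
(classes E₁₁₁ and G₃). -/
theorem webF_covariant_derivatives (x y : Fin 2 → ℝ)
    (h : x 0 * y 1 ≠ -1) (Δ : ℝ) (hΔ : Δ = 1 + x 0 * y 1) :
    pCov webF 0 1 x y = 0 ∧ pCov webF 1 1 x y = 0 ∧
    qCov webF 0 0 x y = 0 ∧ qCov webF 1 0 x y = 0 ∧
    pCov webF 0 0 x y = 2 * (y 1)^2 / Δ^4 ∧
    qCov webF 1 1 x y = -(2 * (x 0)^2) / Δ^4 ∧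
    pCov webF 1 0 x y = (1 - x 0 * y 1) / Δ^4 ∧
    qCov webF 0 1 x y = -((1 - x 0 * y 1) / Δ^4) ∧
    qCov webF 0 1 x y = -(pCov webF 1 0 x y) ∧
    pIso webF x y = (x 0 * y 1 - 1) / (2 * Δ^4) ∧
    qIso webF x y = (x 0 * y 1 - 1) / (2 * Δ^4) := by
  have hΔ0 : 1 + x 0 * y 1 ≠ 0 := fun h0 => h (by linarith)
  subst hΔ
  simp only [pIso, qIso, webF_pCov hΔ0, webF_qCov hΔ0]
  norm_num
  refine ⟨by ring, ?_, ?_⟩ <;> field_simp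
  ring

end
end
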